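/- The number of permutations of {1,...,n} avoiding the pattern 132 equals the Catalan number C_n. -/

import Mathlib

/-- A permutation avoids the pattern 132 if there are no positions
`i < j < k` with `π i < π k < π j`. -/
def Avoids132 {n : ℕ} (π : Equiv.Perm (Fin n)) : Prop :=
  ¬ ∃ i j k : Fin n, i < j ∧ j < k ∧ π i < π k ∧ π k < π j

/-!
In a 132-avoiding permutation of `Fin (n + 1)` with its maximum at position `a`, every value to
the left of the maximum exceeds every value to its right, since otherwise the two values together
with the maximum form a 132. So the permutation is the skew sum `(σ ⊕ 1) ⊖ τ` of 132-avoiding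
permutations `σ` of size `a` and `τ` of size `n - a`, and conversely every such skew sum avoids
132. Counting by the position of the maximum gives the Catalan recurrence
`C (n + 1) = ∑ a, C a * C (n - a)`.
-/

open Equiv Fin

lemma Fin.castAdd_lt_natAdd {m n : ℕ} (i : Fin m) (j : Fin n) : castAdd n i < natAdd m j :=
  Fin.lt_def.2 ((castAdd_lt n i).trans_le (Nat.le_add_right m j))

namespace Equiv.Perm

variable {a b : ℕ}

/-- The direct sum `σ ⊕ τ`: `σ` on the first `a` positions, `τ` shifted up on the last `b`. -/
def directSum (σ : Perm (Fin a)) (τ : Perm (Fin b)) : Perm (Fin (a + b)) :=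
  finSumFinEquiv.equivCongr finSumFinEquiv (σ.sumCongr τ)

/-- The skew sum `σ ⊖ τ`: `σ` shifted up on the first `a` positions, `τ` on the last `b`. -/
def skewSum (σ : Perm (Fin a)) (τ : Perm (Fin b)) : Perm (Fin (a + b)) :=
  finSumFinEquiv.equivCongr ((sumComm _ _).trans (finSumFinEquiv.trans (finCongr (b.add_comm a))))
    (σ.sumCongr τ)

@[simp]
lemma directSum_apply_castAdd (σ : Perm (Fin a)) (τ : Perm (Fin b)) (i : Fin a) :
    directSum σ τ (castAdd b i) = castAdd b (σ i) := by
  simp [directSum]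

@[simp]
lemma directSum_apply_natAdd (σ : Perm (Fin a)) (τ : Perm (Fin b)) (j : Fin b) :
    directSum σ τ (natAdd a j) = natAdd a (τ j) := by
  simp [directSum]

@[simp]
lemma directSum_one_apply_last (σ : Perm (Fin a)) :
    directSum σ (1 : Perm (Fin 1)) (last a) = last a :=
  directSum_apply_natAdd σ 1 0

@[simp]
lemma val_skewSum_apply_castAdd (σ : Perm (Fin a)) (τ : Perm (Fin b)) (i : Fin a) :
    (skewSum σ τ (castAdd b i) : ℕ) = σ i + b := by
  simp [skewSum]

@[simp]
lemma val_skewSum_apply_natAdd (σ : Perm (Fin a)) (τ : Perm (Fin b)) (j : Fin b) :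
    (skewSum σ τ (natAdd a j) : ℕ) = τ j := by
  simp [skewSum]

lemma directSum_inj {σ σ' : Perm (Fin a)} {τ τ' : Perm (Fin b)} :
    directSum σ τ = directSum σ' τ' ↔ σ = σ' ∧ τ = τ' := by
  refine ⟨fun h ↦ Prod.mk.inj (sumCongrHom_injective ((equivCongr _ _).injective h)), ?_⟩
  rintro ⟨rfl, rfl⟩
  rfl

lemma skewSum_inj {σ σ' : Perm (Fin a)} {τ τ' : Perm (Fin b)} :
    skewSum σ τ = skewSum σ' τ' ↔ σ = σ' ∧ τ = τ' := by
  refine ⟨fun h ↦ Prod.mk.inj (sumCongrHom_injective ((equivCongr _ _).injective h)), ?_⟩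
  rintro ⟨rfl, rfl⟩
  rfl

lemma exists_equivCongr_sumCongr_eq {α β γ : Type*} [Finite α] [Finite β]
    (e f : α ⊕ β ≃ γ) (π : Perm γ) (h : ∀ x, ∃ y, π (e (.inl x)) = f (.inl y)) :
    ∃ (σ : Perm α) (τ : Perm β), e.equivCongr f (σ.sumCongr τ) = π := by
  obtain ⟨⟨σ, τ⟩, hστ⟩ :=
    mem_sumCongrHom_range_of_perm_mapsTo_inl (σ := (e.equivCongr f).symm π) (by
      rintro _ ⟨x, rfl⟩
      obtain ⟨y, hy⟩ := h x
      exact ⟨y, by simp [hy]⟩)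
  exact ⟨σ, τ, (congrArg (e.equivCongr f) hστ).trans (apply_symm_apply _ _)⟩

lemma exists_directSum_eq (π : Perm (Fin (a + b)))
    (h : ∀ i j, π (castAdd b i) < π (natAdd a j)) : ∃ σ τ, directSum σ τ = π := by
  have hlt (i : Fin a) : (π (castAdd b i) : ℕ) < a := by
    have := Finset.card_le_card_of_injOn (s := .univ) (t := .Ioi (π (castAdd b i)))
      (fun j ↦ π (natAdd a j)) (by simp [h]) (π.injective.comp (natAdd_injective b a)).injOn
    simp only [Finset.card_univ, Fintype.card_fin, card_Ioi] at this
    omega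
  exact exists_equivCongr_sumCongr_eq _ _ π fun i ↦ ⟨⟨_, hlt i⟩, by ext; simp⟩

lemma exists_skewSum_eq (π : Perm (Fin (a + b)))
    (h : ∀ i j, π (natAdd a j) < π (castAdd b i)) : ∃ σ τ, skewSum σ τ = π := by
  have hle (i : Fin a) : b ≤ (π (castAdd b i) : ℕ) := by
    simpa using Finset.card_le_card_of_injOn (s := .univ) (t := .Iio (π (castAdd b i)))
      (fun j ↦ π (natAdd a j)) (by simp [h]) (π.injective.comp (natAdd_injective b a)).injOn
  refine exists_equivCongr_sumCongr_eq _ _ π fun i ↦ ?_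
  have := hle i
  refine ⟨⟨π (castAdd b i) - b, by omega⟩, Fin.ext ?_⟩
  simp only [finSumFinEquiv_apply_left, trans_apply, sumComm_apply, Sum.swap_inl,
    finSumFinEquiv_apply_right, finCongr_apply, val_cast, val_natAdd]
  omega

end Equiv.Perm

open Equiv.Perm

lemma Avoids132.of_comp {m n : ℕ} {π : Perm (Fin n)} {σ : Perm (Fin m)}
    (hπ : Avoids132 π) {f : Fin m → Fin n} {g : ℕ → ℕ} (hf : StrictMono f)
    (hg : StrictMono g)
    (h : ∀ i, (π (f i) : ℕ) = g (σ i)) : Avoids132 σ := by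
  rintro ⟨i, j, k, hij, hjk, hik, hkj⟩
  refine hπ ⟨f i, f j, f k, hf hij, hf hjk, ?_, ?_⟩ <;> rw [Fin.lt_def, h, h] <;> apply hg
  exacts [hik, hkj]

lemma avoids132_permCongr_finCongr_iff {m n : ℕ} (h : m = n) (π : Perm (Fin m)) :
    Avoids132 ((finCongr h).permCongr π) ↔ Avoids132 π := by
  subst h
  rfl

section

variable {a b : ℕ}

lemma avoids132_skewSum_iff {σ : Perm (Fin a)} {τ : Perm (Fin b)} :
    Avoids132 (skewSum σ τ) ↔ Avoids132 σ ∧ Avoids132 τ := by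
  refine ⟨fun h ↦ ⟨h.of_comp (strictMono_castAdd b) (strictMono_id.add_const b) (by simp),
    h.of_comp (strictMono_natAdd a) strictMono_id (by simp)⟩, ?_⟩
  rintro ⟨hσ, hτ⟩ ⟨i, j, k, hij, hjk, hik, hkj⟩
  -- An occurrence meeting both blocks needs a value of the first block below one of the second.
  induction i using Fin.addCases <;> induction j using Fin.addCases <;>
    induction k using Fin.addCases <;>
    simp only [Fin.lt_def, val_castAdd, val_natAdd, val_skewSum_apply_castAdd,
      val_skewSum_apply_natAdd, Nat.add_lt_add_iff_left, Nat.add_lt_add_iff_right]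
      at hij hjk hik hkj
  all_goals first
    | omega
    | exact hσ ⟨_, _, _, Fin.lt_def.2 hij, Fin.lt_def.2 hjk, Fin.lt_def.2 hik,
        Fin.lt_def.2 hkj⟩
    | exact hτ ⟨_, _, _, Fin.lt_def.2 hij, Fin.lt_def.2 hjk, Fin.lt_def.2 hik,
        Fin.lt_def.2 hkj⟩

lemma avoids132_directSum_one_iff {σ : Perm (Fin a)} :
    Avoids132 (directSum σ (1 : Perm (Fin 1))) ↔ Avoids132 σ := by
  refine ⟨fun h ↦ h.of_comp (strictMono_castAdd 1) strictMono_id (by simp), ?_⟩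
  rintro hσ ⟨i, j, k, hij, hjk, hik, hkj⟩
  induction i using Fin.addCases <;> induction j using Fin.addCases <;>
    induction k using Fin.addCases <;>
    simp only [Fin.lt_def, val_castAdd, val_natAdd, directSum_apply_castAdd,
      directSum_apply_natAdd] at hij hjk hik hkj
  all_goals first
    | omega
    | exact hσ ⟨_, _, _, Fin.lt_def.2 hij, Fin.lt_def.2 hjk, Fin.lt_def.2 hik,
        Fin.lt_def.2 hkj⟩

lemma Avoids132.exists_skewSum_directSum_one_eq {π : Perm (Fin (a + 1 + b))}
    (hπ : Avoids132 π) (hmax : (π (castAdd b (last a)) : ℕ) = a + b) :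
    ∃ σ τ, skewSum (directSum σ (1 : Perm (Fin 1))) τ = π := by
  have hcross (p : Fin (a + 1)) (q : Fin b) : π (natAdd (a + 1) q) < π (castAdd b p) := by
    have hne : π (natAdd (a + 1) q) ≠ π (castAdd b (last a)) :=
      π.injective.ne (castAdd_lt_natAdd _ _).ne'
    have hle_max : π (natAdd (a + 1) q) ≤ π (castAdd b (last a)) := Fin.le_def.2 (by omega)
    induction p using Fin.lastCases with
    | last => exact lt_of_le_of_ne hle_max hne
    | cast i =>
      refine lt_of_not_ge fun hle ↦ hπ ⟨castAdd b i.castSucc, castAdd b (last a),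
        natAdd (a + 1) q, strictMono_castAdd b (castSucc_lt_last i), castAdd_lt_natAdd _ _, ?_,
        lt_of_le_of_ne hle_max hne⟩
      exact lt_of_le_of_ne hle (π.injective.ne (castAdd_lt_natAdd _ _).ne)
  obtain ⟨ρ, τ, rfl⟩ := exists_skewSum_eq π hcross
  have hlast : ρ (last a) = last a := Fin.ext (by simpa using hmax)
  obtain ⟨σ, τ₁, rfl⟩ := exists_directSum_eq ρ fun i j ↦ by
    rw [show natAdd a j = last a from Fin.ext (by simp [Subsingleton.elim j 0]), hlast,
      lt_last_iff_ne_last, ← hlast]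
    exact ρ.injective.ne (castSucc_lt_last i).ne
  exact ⟨σ, τ, by rw [Subsingleton.elim τ₁ 1]⟩

end

def insertMax (n : ℕ)
    (x : Σ a : Fin (n + 1),
      {σ : Perm (Fin a) // Avoids132 σ} × {τ : Perm (Fin (n - a)) // Avoids132 τ}) :
    {π : Perm (Fin (n + 1)) // Avoids132 π} :=
  ⟨(finCongr (show (x.1 : ℕ) + 1 + (n - x.1) = n + 1 by have := x.1.isLt; omega)).permCongr
      (skewSum (directSum x.2.1.1 1) x.2.2.1), by
    rw [avoids132_permCongr_finCongr_iff, avoids132_skewSum_iff, avoids132_directSum_one_iff]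
    exact ⟨x.2.1.2, x.2.2.2⟩⟩

lemma insertMax_apply_fst (n : ℕ)
    (x : Σ a : Fin (n + 1),
      {σ : Perm (Fin a) // Avoids132 σ} × {τ : Perm (Fin (n - a)) // Avoids132 τ}) :
    (insertMax n x).1 x.1 = last n := by
  ext
  rw [insertMax, permCongr_apply,
    show (finCongr _).symm x.1 = castAdd (n - x.1) (last x.1) from rfl]
  simp only [finCongr_apply, val_cast, val_skewSum_apply_castAdd, directSum_one_apply_last,
    val_last]
  have := x.1.isLt
  omega

lemma insertMax_bijective (n : ℕ) : Function.Bijective (insertMax n) := by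
  refine ⟨?_, ?_⟩
  · rintro ⟨a, σ, τ⟩ ⟨a', σ', τ'⟩ h
    obtain rfl : a = a' := by
      have ha := insertMax_apply_fst n ⟨a, σ, τ⟩
      rw [h, ← insertMax_apply_fst n ⟨a', σ', τ'⟩] at ha
      exact Equiv.injective _ ha
    simp only [insertMax, Subtype.mk.injEq, EmbeddingLike.apply_eq_iff_eq, skewSum_inj,
      directSum_inj] at h
    obtain ⟨⟨hσ, -⟩, hτ⟩ := h
    rw [Subtype.ext hσ, Subtype.ext hτ]
  · rintro ⟨π, hπ⟩
    set a := π.symm (last n)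
    have hsize : n + 1 = a + 1 + (n - a) := by have := a.isLt; omega
    have hρ : Avoids132 ((finCongr hsize).permCongr π) := by
      rwa [avoids132_permCongr_finCongr_iff]
    have hmax : ((finCongr hsize).permCongr π (castAdd (n - a) (last a)) : ℕ) = a + (n - a) := by
      rw [permCongr_apply, show (finCongr hsize).symm (castAdd (n - a) (last a)) = a from rfl]
      simp only [a, apply_symm_apply, finCongr_apply, val_cast, val_last]
      have := a.isLt
      omega
    obtain ⟨σ, τ, hστ⟩ := hρ.exists_skewSum_directSum_one_eq hmax
    rw [← hστ, avoids132_skewSum_iff, avoids132_directSum_one_iff] at hρ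
    refine ⟨⟨a, ⟨σ, hρ.1⟩, ⟨τ, hρ.2⟩⟩, Subtype.ext ?_⟩
    rw [insertMax, Subtype.coe_mk, hστ]
    ext p
    simp

lemma card_avoids132_succ (n : ℕ) :
    Nat.card {π : Perm (Fin (n + 1)) // Avoids132 π} = ∑ a : Fin (n + 1),
      Nat.card {σ : Perm (Fin a) // Avoids132 σ} *
        Nat.card {τ : Perm (Fin (n - a)) // Avoids132 τ} := by
  rw [← Nat.card_eq_of_bijective _ (insertMax_bijective n), Nat.card_sigma]
  simp only [Nat.card_prod]

lemma card_avoids132_zero : Nat.card {π : Perm (Fin 0) // Avoids132 π} = 1 :=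
  Nat.card_eq_one_iff_unique.2 ⟨inferInstance, ⟨⟨1, fun ⟨i, _⟩ ↦ i.elim0⟩⟩⟩

theorem count_avoiding_132_eq_catalan (n : ℕ) :
    Nat.card {π : Equiv.Perm (Fin n) // Avoids132 π} = catalan n := by
  induction n using Nat.strong_induction_on with
  | _ n ih =>
    cases n with
    | zero => rw [card_avoids132_zero, catalan_zero]
    | succ n =>
      rw [card_avoids132_succ, catalan_succ]
      refine Finset.sum_congr rfl fun a _ ↦ ?_
      rw [ih a (by omega), ih (n - a) (by omega)]
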